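/- Let a > 0, ε ∈ (0,1), C > 0, and let f : [0,1) → ℝ be differentiable and positive with f'(t) ≥ (1/(1−t))(f(t) − a²/f(t)) and f(0) ≥ a/√(1−ε²). Suppose F : [0,1) → ℝ satisfies 0 ≤ F(t) ≤ C/((1−t)·f(t)) for all t. Then F(t) ≤ C·√(1−ε²)/(a·ε) for all t ∈ [0,1), i.e. F is uniformly bounded. -/

import Mathlib

/-! The quantity `(1 - t)² (f(t)² - a²)` is nondecreasing on `[0, 1)`: its derivative is
`2 (1 - t) ((1 - t) f f' - (f² - a²))`, which the differential inequality makes nonnegative.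
Comparing with `t = 0` and using `f(0)² - a² ≥ a² ε² / (1 - ε²)` gives
`(1 - t) f(t) ≥ a ε / √(1 - ε²)`, and the bound on `F` follows. -/

open Set

lemma sq_sub_sq_le_mul_of_ge {a t y y' : ℝ} (ht : 0 < 1 - t) (hy : 0 < y)
    (h : y' ≥ (1 / (1 - t)) * (y - a ^ 2 / y)) :
    y ^ 2 - a ^ 2 ≤ (1 - t) * y * y' :=
  calc y ^ 2 - a ^ 2 = (1 - t) * y * ((1 / (1 - t)) * (y - a ^ 2 / y)) := by field_simp
    _ ≤ (1 - t) * y * y' := by gcongr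

lemma hasDerivAt_one_sub_sq_mul_sq_sub {f : ℝ → ℝ} {y' a t : ℝ} (hf : HasDerivAt f y' t) :
    HasDerivAt (fun u => (1 - u) ^ 2 * (f u ^ 2 - a ^ 2))
      (2 * (1 - t) * ((1 - t) * f t * y' - (f t ^ 2 - a ^ 2))) t := by
  have hw : HasDerivAt (fun u : ℝ => (1 - u) ^ 2) (-(2 * (1 - t))) t := by
    simpa using ((hasDerivAt_id t).const_sub 1).fun_pow 2
  refine (hw.fun_mul ((hf.fun_pow 2).sub_const (a ^ 2))).congr_deriv ?_
  push_cast
  ring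

lemma monotoneOn_one_sub_sq_mul_sq_sub {a : ℝ} {f f' : ℝ → ℝ}
    (hderiv : ∀ t ∈ Ico (0:ℝ) 1, HasDerivAt f (f' t) t)
    (hpos : ∀ t ∈ Ico (0:ℝ) 1, 0 < f t)
    (hineq : ∀ t ∈ Ico (0:ℝ) 1, f' t ≥ (1 / (1 - t)) * (f t - a ^ 2 / f t)) :
    MonotoneOn (fun t => (1 - t) ^ 2 * (f t ^ 2 - a ^ 2)) (Ico 0 1) := by
  have hG (t) (ht : t ∈ Ico (0:ℝ) 1) := hasDerivAt_one_sub_sq_mul_sq_sub (a := a) (hderiv t ht)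
  refine monotoneOn_of_hasDerivWithinAt_nonneg (convex_Ico 0 1)
    (f' := fun t => 2 * (1 - t) * ((1 - t) * f t * f' t - (f t ^ 2 - a ^ 2)))
    (fun t ht => (hG t ht).continuousAt.continuousWithinAt) (fun t ht => ?_) (fun t ht => ?_)
  · rw [interior_Ico] at ht ⊢
    exact (hG t (Ioo_subset_Ico_self ht)).hasDerivWithinAt
  · rw [interior_Ico] at ht
    have ht' := Ioo_subset_Ico_self ht
    have h1t : 0 < 1 - t := by linarith [ht.2]
    have hkey := sq_sub_sq_le_mul_of_ge h1t (hpos t ht') (hineq t ht')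
    have : 0 ≤ (1 - t) * f t * f' t - (f t ^ 2 - a ^ 2) := by linarith
    positivity

lemma div_sqrt_one_sub_sq_sq_sub_sq {a ε : ℝ} (hε : ε ^ 2 < 1) :
    (a / √(1 - ε ^ 2)) ^ 2 - a ^ 2 = (a * ε / √(1 - ε ^ 2)) ^ 2 := by
  have h : 0 < 1 - ε ^ 2 := by linarith
  rw [div_pow, div_pow, Real.sq_sqrt h.le]
  field_simp
  ring

theorem stmt_8 (a ε C : ℝ) (ha : 0 < a) (hε : ε ∈ Ioo (0:ℝ) 1) (hC : 0 < C)
    (f f' F : ℝ → ℝ)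
    (hderiv : ∀ t ∈ Ico (0:ℝ) 1, HasDerivAt f (f' t) t)
    (hpos : ∀ t ∈ Ico (0:ℝ) 1, 0 < f t)
    (hineq : ∀ t ∈ Ico (0:ℝ) 1, f' t ≥ (1 / (1 - t)) * (f t - a ^ 2 / f t))
    (hf0 : f 0 ≥ a / Real.sqrt (1 - ε ^ 2))
    (hF : ∀ t ∈ Ico (0:ℝ) 1, 0 ≤ F t ∧ F t ≤ C / ((1 - t) * f t)) :
    ∀ t ∈ Ico (0:ℝ) 1, F t ≤ C * Real.sqrt (1 - ε ^ 2) / (a * ε) := by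
  intro t ht
  have hε2 : ε ^ 2 < 1 := by nlinarith [hε.1, hε.2]
  have hm : 0 < a * ε / √(1 - ε ^ 2) := by have := hε.1; positivity
  have h1t : 0 < 1 - t := by linarith [ht.2]
  have hsq : (a * ε / √(1 - ε ^ 2)) ^ 2 ≤ ((1 - t) * f t) ^ 2 :=
    calc (a * ε / √(1 - ε ^ 2)) ^ 2 = (a / √(1 - ε ^ 2)) ^ 2 - a ^ 2 :=
          (div_sqrt_one_sub_sq_sq_sub_sq hε2).symm
      _ ≤ (1 - 0) ^ 2 * (f 0 ^ 2 - a ^ 2) := by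
          have : 0 ≤ a / √(1 - ε ^ 2) := by positivity
          nlinarith
      _ ≤ (1 - t) ^ 2 * (f t ^ 2 - a ^ 2) :=
          monotoneOn_one_sub_sq_mul_sq_sub hderiv hpos hineq ⟨le_rfl, one_pos⟩ ht ht.1
      _ ≤ ((1 - t) * f t) ^ 2 := by nlinarith
  have hlow := (sq_le_sq₀ hm.le (mul_pos h1t (hpos t ht)).le).1 hsq
  calc F t ≤ C / ((1 - t) * f t) := (hF t ht).2
    _ ≤ C / (a * ε / √(1 - ε ^ 2)) := div_le_div_of_nonneg_left hC.le hm hlow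
    _ = C * √(1 - ε ^ 2) / (a * ε) := by field_simp
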